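/- The operator T = Id⊗Q_1 : ℓ_2 ⊗̂ ℓ_2 → ℓ_2, where Q_1 is the rank-one projection onto the first basis vector, restricted to the symmetric tensor product, is weakly compact but not completely continuous: the sequence u_n = e_n⊗e_1 + e_1⊗e_n is weakly null in ℓ_2 ⊗̂ ℓ_2 but ‖T(u_n)‖ does not tend to 0. -/

import Mathlib

open Filter Topology

noncomputable section

/-- The topological dual of a normed space (Mathlib's former `NormedSpace.Dual`, since removed). -/
abbrev NormedSpace.Dual (𝕜 : Type*) [NontriviallyNormedField 𝕜] (E : Type*)
    [SeminormedAddCommGroup E] [NormedSpace 𝕜 E] : Type _ := E →L[𝕜] 𝕜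

/-- The Hilbert space `ℓ₂`. -/
abbrev ellTwo : Type := lp (fun _ : ℕ => ℂ) 2

/-- The elementary tensor `x ⊗ y ∈ ℓ₂ ⊗̂ ℓ₂`, viewed canonically as a functional on the
space of bounded bilinear forms on `ℓ₂` (the dual of `ℓ₂ ⊗̂ ℓ₂`). -/
def elemTensor (x y : ellTwo) :
    NormedSpace.Dual ℂ (ContinuousMultilinearMap ℂ (fun _ : Fin 2 => ellTwo) ℂ) :=
  ContinuousMultilinearMap.apply ℂ (fun _ : Fin 2 => ellTwo) ℂ ![x, y]

/-- The projective tensor product `ℓ₂ ⊗̂ ℓ₂`, realized as the closed linear span of the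
elementary tensors inside the dual of the space of bounded bilinear forms on `ℓ₂`. -/
def ellTwoTensor :
    Submodule ℂ
      (NormedSpace.Dual ℂ (ContinuousMultilinearMap ℂ (fun _ : Fin 2 => ellTwo) ℂ)) :=
  (Submodule.span ℂ (Set.range (fun p : ellTwo × ellTwo => elemTensor p.1 p.2))).topologicalClosure

theorem elemTensor_mem (x y : ellTwo) : elemTensor x y ∈ ellTwoTensor :=
  Submodule.le_topologicalClosure _ (Submodule.subset_span ⟨(x, y), rfl⟩)

/-- The standard unit vectors of `ℓ₂`. -/
def e (n : ℕ) : ellTwo := lp.single 2 n 1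

/-- The sequence `u_n = e_n ⊗ e_1 + e_1 ⊗ e_n` in `ℓ₂ ⊗̂ ℓ₂` (indexing from `0`). -/
def u (n : ℕ) : ellTwoTensor :=
  ⟨elemTensor (e n) (e 0) + elemTensor (e 0) (e n),
    (ellTwoTensor).add_mem (elemTensor_mem _ _) (elemTensor_mem _ _)⟩

/-!
`T` is the pre-adjoint of the bounded map `φ ↦ ((x, y) ↦ φ x * y₀)` from the dual of `ℓ₂` to the
bilinear forms on `ℓ₂`; the pre-adjoint exists because a Hilbert space is its own bidual (Riesz
representation, applied twice). Any bounded map into `ℓ₂` is weakly compact by the sequential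
Banach–Alaoglu theorem, `ℓ₂` being separable and self-dual. By Bessel's inequality the orthonormal
sequence `eₙ` is weakly null, hence so are its images `eₙ ⊗ e₀` and `e₀ ⊗ eₙ` under bounded maps,
and thus `uₙ`; yet `T uₙ = eₙ` is a unit vector for `n ≠ 0`.
-/

open TopologicalSpace InnerProductSpace
open scoped InnerProductSpace

section Hilbert

variable {𝕜 E : Type*} [RCLike 𝕜] [NormedAddCommGroup E] [InnerProductSpace 𝕜 E]

theorem HilbertBasis.separableSpace {ι : Type*} [Countable ι] (b : HilbertBasis ι 𝕜 E) :
    SeparableSpace E := by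
  rw [← isSeparable_univ_iff, ← Submodule.top_coe (R := 𝕜), ← b.dense_span,
    Submodule.topologicalClosure_coe]
  exact (Set.countable_range b).isSeparable.span.closure

variable [CompleteSpace E]

theorem InnerProductSpace.conj_toDual_apply_toDual_symm (x : E) (φ : StrongDual 𝕜 E) :
    starRingEnd 𝕜 (toDual 𝕜 E x ((toDual 𝕜 E).symm φ)) = φ x := by
  rw [toDual_apply_apply, inner_conj_symm, toDual_symm_apply]

theorem Orthonormal.tendsto_dual_apply_zero {v : ℕ → E} (hv : Orthonormal 𝕜 v)
    (φ : StrongDual 𝕜 E) : Tendsto (fun n => φ (v n)) atTop (𝓝 0) := by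
  set w := (toDual 𝕜 E).symm φ
  have hnorm (n : ℕ) : ‖φ (v n)‖ = ‖⟪v n, w⟫_𝕜‖ := by
    rw [← toDual_symm_apply, norm_inner_symm]
  rw [tendsto_zero_iff_norm_tendsto_zero]
  simpa [hnorm] using (hv.inner_products_summable w).tendsto_atTop_zero.sqrt

theorem exists_subseq_forall_dual_tendsto [SeparableSpace E] {a : ℕ → E} {R : ℝ}
    (ha : ∀ n, ‖a n‖ ≤ R) :
    ∃ ψ : ℕ → ℕ, StrictMono ψ ∧ ∃ z : E,
      ∀ φ : StrongDual 𝕜 E, Tendsto (fun n => φ (a (ψ n))) atTop (𝓝 (φ z)) := by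
  let b (n : ℕ) : WeakDual 𝕜 E := toDual 𝕜 E (a n)
  have hb (n : ℕ) : b n ∈ WeakDual.toStrongDual ⁻¹' Metric.closedBall 0 R := by
    rw [Set.mem_preimage, mem_closedBall_zero_iff]
    exact ((toDual 𝕜 E).norm_map (a n)).trans_le (ha n)
  obtain ⟨f, -, ψ, hψ, hlim⟩ := WeakDual.isSeqCompact_closedBall 𝕜 E 0 R hb
  set z := (toDual 𝕜 E).symm (WeakDual.toStrongDual f)
  refine ⟨ψ, hψ, z, fun φ => ?_⟩
  have hf : Tendsto (fun n => toDual 𝕜 E (a (ψ n)) ((toDual 𝕜 E).symm φ)) atTop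
      (𝓝 (toDual 𝕜 E z ((toDual 𝕜 E).symm φ))) := by
    rw [LinearIsometryEquiv.apply_symm_apply]
    exact ((WeakDual.eval_continuous _).tendsto f).comp hlim
  simpa only [Function.comp_def, conj_toDual_apply_toDual_symm] using
    (RCLike.continuous_conj.tendsto _).comp hf

namespace InnerProductSpace

/-- The Riesz representative of `w ↦ conj (G (toDual w))`; the conjugation undoes the
conjugate-linearity of `toDual`. -/
def ofDoubleDualAux (G : StrongDual 𝕜 (StrongDual 𝕜 E)) : E :=
  (toDual 𝕜 E).symm (((starL 𝕜 : 𝕜 ≃L⋆[𝕜] 𝕜) : 𝕜 →L⋆[𝕜] 𝕜).comp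
    (G.comp ((toDual 𝕜 E).toContinuousLinearEquiv : E →L⋆[𝕜] StrongDual 𝕜 E)))

theorem apply_ofDoubleDualAux (G : StrongDual 𝕜 (StrongDual 𝕜 E)) (φ : StrongDual 𝕜 E) :
    φ (ofDoubleDualAux G) = G φ := by
  rw [ofDoubleDualAux, ← conj_toDual_apply_toDual_symm, LinearIsometryEquiv.apply_symm_apply]
  simp

theorem norm_ofDoubleDualAux_le (G : StrongDual 𝕜 (StrongDual 𝕜 E)) :
    ‖ofDoubleDualAux G‖ ≤ ‖G‖ := by
  rw [ofDoubleDualAux, LinearIsometryEquiv.norm_map]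
  refine ContinuousLinearMap.opNorm_le_bound _ (norm_nonneg G) fun w => ?_
  simpa using G.le_opNorm (toDual 𝕜 E w)

def ofDoubleDual : StrongDual 𝕜 (StrongDual 𝕜 E) →L[𝕜] E :=
  LinearMap.mkContinuous
    { toFun := ofDoubleDualAux (𝕜 := 𝕜) (E := E)
      map_add' := fun G H => (SeparatingDual.eq_iff_forall_dual_eq (R := 𝕜)).2 fun φ => by
        simp [apply_ofDoubleDualAux]
      map_smul' := fun c G => (SeparatingDual.eq_iff_forall_dual_eq (R := 𝕜)).2 fun φ => by
        simp [apply_ofDoubleDualAux] }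
    1 fun G => by simpa using norm_ofDoubleDualAux_le G

theorem apply_ofDoubleDual (G : StrongDual 𝕜 (StrongDual 𝕜 E)) (φ : StrongDual 𝕜 E) :
    φ (ofDoubleDual G) = G φ :=
  apply_ofDoubleDualAux (𝕜 := 𝕜) G φ

end InnerProductSpace

variable {X : Type*} [NormedAddCommGroup X] [NormedSpace 𝕜 X]

def ContinuousLinearMap.preadjoint (L : StrongDual 𝕜 E →L[𝕜] X) : StrongDual 𝕜 X →L[𝕜] E :=
  InnerProductSpace.ofDoubleDual ∘L (ContinuousLinearMap.compL 𝕜 _ X 𝕜).flip L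

theorem ContinuousLinearMap.apply_preadjoint (L : StrongDual 𝕜 E →L[𝕜] X) (F : StrongDual 𝕜 X)
    (φ : StrongDual 𝕜 E) : φ (L.preadjoint F) = F (L φ) :=
  InnerProductSpace.apply_ofDoubleDual _ φ

end Hilbert

section CurryFinTwo

variable {𝕜 E G : Type*} [NontriviallyNormedField 𝕜] [NormedAddCommGroup E] [NormedSpace 𝕜 E]
  [NormedAddCommGroup G] [NormedSpace 𝕜 G]

def continuousMultilinearCurryFinTwo :
    ContinuousMultilinearMap 𝕜 (fun _ : Fin 2 => E) G ≃L[𝕜] (E →L[𝕜] E →L[𝕜] G) :=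
  (continuousMultilinearCurryLeftEquiv 𝕜 (fun _ : Fin 2 => E) G).toContinuousLinearEquiv.trans
    ((ContinuousLinearEquiv.refl 𝕜 E).arrowCongr
      (continuousMultilinearCurryFin1 𝕜 E G).toContinuousLinearEquiv)

@[simp]
theorem continuousMultilinearCurryFinTwo_apply
    (B : ContinuousMultilinearMap 𝕜 (fun _ : Fin 2 => E) G) (x y : E) :
    continuousMultilinearCurryFinTwo B x y = B ![x, y] := by
  simp [continuousMultilinearCurryFinTwo]

end CurryFinTwo

theorem coe_default_hilbertBasis : ⇑(default : HilbertBasis ℕ ℂ ellTwo) = e := by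
  ext1 n
  exact (HilbertBasis.repr_symm_single (default : HilbertBasis ℕ ℂ ellTwo) n).symm

theorem orthonormal_e : Orthonormal ℂ e :=
  coe_default_hilbertBasis ▸ (default : HilbertBasis ℕ ℂ ellTwo).orthonormal

instance : SeparableSpace ellTwo := (default : HilbertBasis ℕ ℂ ellTwo).separableSpace

theorem e_apply_zero (n : ℕ) : (e n : ℕ → ℂ) 0 = if n = 0 then 1 else 0 := by
  simp [e, lp.single_apply, Pi.single_apply, eq_comm]

local notation "BilinForms" => ContinuousMultilinearMap ℂ (fun _ : Fin 2 => ellTwo) ℂ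

def elemTensorL : ellTwo →L[ℂ] ellTwo →L[ℂ] NormedSpace.Dual ℂ BilinForms :=
  ((ContinuousLinearMap.flipₗᵢ ℂ BilinForms ellTwo ℂ).toContinuousLinearEquiv :
      (BilinForms →L[ℂ] ellTwo →L[ℂ] ℂ) →L[ℂ] ellTwo →L[ℂ] NormedSpace.Dual ℂ BilinForms) ∘L
    (continuousMultilinearCurryFinTwo.toContinuousLinearMap :
      BilinForms →L[ℂ] ellTwo →L[ℂ] ellTwo →L[ℂ] ℂ).flip

theorem elemTensorL_apply (x y : ellTwo) : elemTensorL x y = elemTensor x y := by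
  ext B
  simp [elemTensorL, elemTensor]

theorem tendsto_dual_apply_u_zero (Φ : StrongDual ℂ ellTwoTensor) :
    Tendsto (fun n => Φ (u n)) atTop (𝓝 0) := by
  let left := (elemTensorL.flip (e 0)).codRestrict ellTwoTensor fun x => by
    simpa [elemTensorL_apply] using elemTensor_mem x (e 0)
  let right := (elemTensorL (e 0)).codRestrict ellTwoTensor fun y => by
    simpa [elemTensorL_apply] using elemTensor_mem (e 0) y
  have hu (n : ℕ) : u n = left (e n) + right (e n) := by
    ext1
    simp [left, right, u, elemTensorL_apply]
  simpa [hu] using (orthonormal_e.tendsto_dual_apply_zero (Φ ∘L left)).add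
    (orthonormal_e.tendsto_dual_apply_zero (Φ ∘L right))

def mulCoordZeroForm : StrongDual ℂ ellTwo →L[ℂ] BilinForms :=
  continuousMultilinearCurryFinTwo.symm.toContinuousLinearMap ∘L
    (ContinuousLinearMap.smulRightL ℂ ellTwo (StrongDual ℂ ellTwo)).flip
      (lp.evalCLM ℂ (fun _ : ℕ => ℂ) 2 0)

theorem mulCoordZeroForm_apply (φ : StrongDual ℂ ellTwo) (x y : ellTwo) :
    mulCoordZeroForm φ ![x, y] = φ x * (y : ℕ → ℂ) 0 := by
  rw [← continuousMultilinearCurryFinTwo_apply]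
  simp [mulCoordZeroForm, lp.evalCLM]

def idTensorQ1 : ellTwoTensor →L[ℂ] ellTwo :=
  mulCoordZeroForm.preadjoint ∘L ellTwoTensor.subtypeL

theorem idTensorQ1_elemTensor (x y : ellTwo) :
    idTensorQ1 ⟨elemTensor x y, elemTensor_mem x y⟩ = ((y : ∀ _ : ℕ, ℂ) 0) • x :=
  (SeparatingDual.eq_iff_forall_dual_eq (R := ℂ)).2 fun φ => by
    simp [idTensorQ1, ContinuousLinearMap.apply_preadjoint, elemTensor, mulCoordZeroForm_apply,
      mul_comm]

theorem idTensorQ1_u_of_ne_zero {n : ℕ} (hn : n ≠ 0) : idTensorQ1 (u n) = e n := by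
  have hsplit : u n = ⟨elemTensor (e n) (e 0), elemTensor_mem _ _⟩ +
      ⟨elemTensor (e 0) (e n), elemTensor_mem _ _⟩ := rfl
  rw [hsplit, map_add, idTensorQ1_elemTensor, idTensorQ1_elemTensor]
  simp [e_apply_zero, hn]

/-- The operator `Id ⊗ Q₁ : ℓ₂ ⊗̂ ℓ₂ → ℓ₂` (with `Q₁` the rank-one projection onto the
first basis vector), i.e. `x ⊗ y ↦ ⟨y, e₁⟩ x`, is weakly compact, and the sequence
`u_n = e_n ⊗ e_1 + e_1 ⊗ e_n` is weakly null in `ℓ₂ ⊗̂ ℓ₂`, yet `‖T u_n‖ ↛ 0`; so `T`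
is weakly compact but not completely continuous. -/
theorem id_tensor_Q1_weakly_compact_not_completely_continuous :
    ∃ T : ellTwoTensor →L[ℂ] ellTwo,
      (∀ x y : ellTwo, T ⟨elemTensor x y, elemTensor_mem x y⟩ = ((y : ∀ _ : ℕ, ℂ) 0) • x) ∧
      (∀ v : ℕ → ellTwoTensor, (∀ n, ‖v n‖ ≤ 1) →
        ∃ ψ : ℕ → ℕ, StrictMono ψ ∧ ∃ z : ellTwo,
          ∀ φ : ellTwo →L[ℂ] ℂ, Tendsto (fun n => φ (T (v (ψ n)))) atTop (𝓝 (φ z))) ∧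
      (∀ Φ : ellTwoTensor →L[ℂ] ℂ, Tendsto (fun n => Φ (u n)) atTop (𝓝 0)) ∧
      ¬ Tendsto (fun n => ‖T (u n)‖) atTop (𝓝 0) := by
  refine ⟨idTensorQ1, idTensorQ1_elemTensor, fun v hv => ?_, tendsto_dual_apply_u_zero, fun h => ?_⟩
  · exact exists_subseq_forall_dual_tendsto (𝕜 := ℂ) fun n =>
      idTensorQ1.le_opNorm_of_le (hv n) |>.trans_eq (mul_one _)
  · have hone : Tendsto (fun n => ‖idTensorQ1 (u n)‖) atTop (𝓝 1) :=
      tendsto_const_nhds.congr' <| (eventually_ne_atTop 0).mono fun n hn => by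
        dsimp only
        rw [idTensorQ1_u_of_ne_zero hn, orthonormal_e.1 n]
    exact one_ne_zero (tendsto_nhds_unique hone h)

end
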